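/- Let F = (A, C) be a finite abstract argumentation framework. An AAF F' = (A, C') is an inverting preference graph of F (i.e., C' = conv(F_0) ∪ F_1 for some preference function f over F) if and only if there exists a CC-wise total order ≼ on F such that F' = F^1_≼, the Reduction 1 of F under ≼. -/
import Mathlib


/-- The three labels of a labelling: `inn` (in), `out`, `undec`. -/
inductive Label where
  | inn : Label
  | out : Label
  | undec : Label
deriving DecidableEq

/-- Undirected connectivity: reachability in the symmetric closure of `C`.
`Conn C a b` holds iff `a` and `b` are joined by an undirected path, i.e.
they lie in the same connected component of `(A, C)`. -/
def Conn {A : Type*} (C : A → A → Prop) : A → A → Prop :=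
  Relation.ReflTransGen (fun x y => C x y ∨ C y x)

/-- A CC-wise total order on the AAF `(A, C)`: a reflexive transitive relation
whose restriction to each connected component is total. -/
structure CCOrder {A : Type*} (C : A → A → Prop) where
  le : A → A → Prop
  refl : ∀ a, le a a
  trans : ∀ a b c, le a b → le b c → le a c
  total : ∀ a b, Conn C a b → le a b ∨ le b a

/-- Strict part: `a ≺ b` iff `a ≼ b` and not `b ≼ a`. -/
def CCOrder.lt {A : Type*} {C : A → A → Prop} (r : CCOrder C) (a b : A) : Prop :=
  r.le a b ∧ ¬ r.le b a

/-- Reduction 1: `C₁ = {(a,b) | ((a,b) ∈ C ∧ b ≼ a) ∨ ((b,a) ∈ C ∧ b ≺ a)}`. -/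
def red1 {A : Type*} (C : A → A → Prop) (r : CCOrder C) (a b : A) : Prop :=
  (C a b ∧ r.le b a) ∨ (C b a ∧ r.lt b a)

/-- Reduction 2: `C₂ = {(a,b) ∈ C | b ≼ a ∨ (b,a) ∉ C}`. -/
def red2 {A : Type*} (C : A → A → Prop) (r : CCOrder C) (a b : A) : Prop :=
  C a b ∧ (r.le b a ∨ ¬ C b a)

/-- Reduction 3: `C₁ ∪ C₂`. -/
def red3 {A : Type*} (C : A → A → Prop) (r : CCOrder C) (a b : A) : Prop :=
  red1 C r a b ∨ red2 C r a b

/-- Reduction 4: `C₄ = {(a,b) ∈ C | b ≼ a}`. -/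
def red4 {A : Type*} (C : A → A → Prop) (r : CCOrder C) (a b : A) : Prop :=
  C a b ∧ r.le b a

/-- `l` is a complete labelling of the attack relation `C`:
`l a = in` iff all attackers of `a` are `out`, and
`l a = out` iff some attacker of `a` is `in` (and `undec` otherwise,
which is automatic for a three-valued labelling). -/
def CompleteLabelling {A : Type*} (C : A → A → Prop) (l : A → Label) : Prop :=
  ∀ a, (l a = Label.inn ↔ ∀ b, C b a → l b = Label.out) ∧
       (l a = Label.out ↔ ∃ b, C b a ∧ l b = Label.inn)

/-- `(a,b) ∈ F₁`: an attack of `C` assigned value 1 by `f`. -/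
def inF1 {A : Type*} (C : A → A → Prop) (f : A → A → Bool) (a b : A) : Prop :=
  C a b ∧ f a b = true

/-- `(a,b) ∈ F₀`: an attack of `C` assigned value 0 by `f`. -/
def inF0 {A : Type*} (C : A → A → Prop) (f : A → A → Bool) (a b : A) : Prop :=
  C a b ∧ f a b = false

/-- The relation `conv(F₀) ∪ F₁`. -/
def Drel {A : Type*} (C : A → A → Prop) (f : A → A → Bool) (a b : A) : Prop :=
  inF0 C f b a ∨ inF1 C f a b

/-- The relation `F₁ \ conv(F₀)`. -/
def Erel {A : Type*} (C : A → A → Prop) (f : A → A → Bool) (a b : A) : Prop :=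
  inF1 C f a b ∧ ¬ inF0 C f b a

/-- `f` is a preference function over `(A, C)`: every directed cycle of
`conv(F₀) ∪ F₁` is entirely contained in `F₁ \ conv(F₀)`.  Equivalently
(edge-wise): every edge of `conv(F₀) ∪ F₁` lying on a directed cycle
(i.e. admitting a return path) belongs to `F₁ \ conv(F₀)`. -/
def IsPrefFun {A : Type*} (C : A → A → Prop) (f : A → A → Bool) : Prop :=
  ∀ a b, Drel C f a b → Relation.ReflTransGen (Drel C f) b a → Erel C f a b

/-- A ranking function for `(F, l)` (assuming no argument is labelled `out`):
(1) every attack touching an `in`-labelled argument strictly decreases rank, and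
(2) every `undec` argument has an `undec` attacker of rank at most its own. -/
def IsRanking {A : Type*} (C : A → A → Prop) (l : A → Label) (ψ : A → ℤ) : Prop :=
  (∀ u v, C u v → (l u = Label.inn ∨ l v = Label.inn) → ψ u > ψ v) ∧
  (∀ u, l u = Label.undec → ∃ v, C v u ∧ l v = Label.undec ∧ ψ v ≤ ψ u)

/-- Rank of `a`: number of elements `P`-below `a`. -/
noncomputable def psiRank {A : Type*} [Fintype A] (P : A → A → Prop) (a : A) : ℕ :=
  Set.ncard {x | P x a}

lemma psiRank_le {A : Type*} [Fintype A] {P : A → A → Prop} {a b : A}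
    (h : ∀ x, P x a → P x b) : psiRank P a ≤ psiRank P b :=
  Set.ncard_le_ncard (fun x hx => h x hx) (Set.toFinite _)

lemma psiRank_lt {A : Type*} [Fintype A] {P : A → A → Prop} {a b : A}
    (h : ∀ x, P x a → P x b) (hb : P b b) (hba : ¬ P b a) :
    psiRank P a < psiRank P b := by
  apply Set.ncard_lt_ncard _ (Set.toFinite _)
  exact ⟨fun x hx => h x hx, fun hsub => hba (hsub hb)⟩

/-- `F' = (A, C')` is an inverting preference graph of `F = (A, C)`
iff `F' = F¹_≼` for some CC-wise total order `≼` on `F`. -/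
theorem stmt0 {A : Type*} [Fintype A] (C C' : A → A → Prop) :
    (∃ f : A → A → Bool, IsPrefFun C f ∧ ∀ a b, C' a b ↔ Drel C f a b) ↔
      (∃ r : CCOrder C, ∀ a b, C' a b ↔ red1 C r a b) := by
  classical
  constructor
  · rintro ⟨f, hpf, hC'⟩
    -- P a b : a is below b, i.e. b reaches a along Drel
    set P : A → A → Prop := fun a b => Relation.ReflTransGen (Drel C f) b a with hP
    have Pstep : ∀ x y, Drel C f x y → P y x := fun x y h =>
      Relation.ReflTransGen.single h
    have Ptrans : ∀ a b c, P a b → P b c → P a c := fun a b c hab hbc =>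
      Relation.ReflTransGen.trans hbc hab
    have Prefl : ∀ a, P a a := fun a => Relation.ReflTransGen.refl
    have Pstrict : ∀ x y, inF0 C f y x → ¬ P x y := by
      intro x y h0 hxy
      have hD : Drel C f x y := Or.inl h0
      have := hpf x y hD hxy
      exact this.2 h0
    -- the rank-based order
    refine ⟨⟨fun a b => psiRank P a ≤ psiRank P b, fun a => le_refl _,
      fun a b c => le_trans, fun a b _ => le_total _ _⟩, ?_⟩
    have hle : ∀ {a b : A}, P a b → psiRank P a ≤ psiRank P b := by
      intro a b hab
      exact psiRank_le (fun x hx => Ptrans x a b hx hab)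
    have hlt : ∀ {a b : A}, P a b → ¬ P b a → psiRank P a < psiRank P b := by
      intro a b hab hba
      exact psiRank_lt (fun x hx => Ptrans x a b hx hab) (Prefl b) hba
    intro a b
    rw [hC']
    constructor
    · intro hD
      rcases hD with h0 | h1
      · -- inF0 C f b a : reversed edge, strict
        have hPba : P b a := Pstep a b (Or.inl h0)
        have hnab : ¬ P a b := Pstrict a b h0
        right
        exact ⟨h0.1, le_of_lt (hlt hPba hnab), not_le.mpr (hlt hPba hnab)⟩
      · -- inF1 C f a b : kept edge
        have hPba : P b a := Pstep a b (Or.inr h1)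
        exact Or.inl ⟨h1.1, hle hPba⟩
    · intro hr
      rcases hr with ⟨hCab, hba⟩ | ⟨hCba, hba, hnab⟩
      · -- C a b and ψ b ≤ ψ a
        cases hf : f a b with
        | true => exact Or.inr ⟨hCab, hf⟩
        | false =>
          exfalso
          have h0 : inF0 C f a b := ⟨hCab, hf⟩
          have hPab : P a b := Pstep b a (Or.inl h0)
          have hnba : ¬ P b a := Pstrict b a h0
          exact absurd hba (not_le.mpr (hlt hPab hnba))
      · -- C b a and ψ b < ψ a (strict)
        cases hf : f b a with
        | false => exact Or.inl ⟨hCba, hf⟩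
        | true =>
          exfalso
          have h1 : inF1 C f b a := ⟨hCba, hf⟩
          have hPab : P a b := Pstep b a (Or.inr h1)
          exact hnab (hle hPab)
  · rintro ⟨r, hC'⟩
    refine ⟨fun a b => decide (r.le b a), ?_, ?_⟩
    · -- preference function
      have hDle : ∀ x y, Drel C (fun a b => decide (r.le b a)) x y → r.le y x := by
        intro x y h
        rcases h with ⟨hCyx, hf⟩ | ⟨_, hf⟩
        · -- inF0 : C y x ∧ decide (r.le x y) = false, so ¬ r.le x y
          have hn : ¬ r.le x y := of_decide_eq_false hf
          rcases r.total y x (Relation.ReflTransGen.single (Or.inl hCyx)) with h | h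
          · exact h
          · exact absurd h hn
        · exact of_decide_eq_true hf
      have hRle : ∀ x y, Relation.ReflTransGen
          (Drel C (fun a b => decide (r.le b a))) x y → r.le y x := by
        intro x y h
        induction h with
        | refl => exact r.refl x
        | tail _ hstep ih => exact r.trans _ _ _ (hDle _ _ hstep) ih
      intro a b hD hback
      have hab : r.le a b := hRle b a hback
      have hnF0 : ¬ inF0 C (fun a b => decide (r.le b a)) b a := by
        rintro ⟨_, hf⟩
        exact (of_decide_eq_false hf) hab
      rcases hD with h0 | h1
      · exact absurd h0 hnF0
      · exact ⟨h1, hnF0⟩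
    · intro a b
      rw [hC' a b]
      constructor
      · rintro (⟨hCab, hba⟩ | ⟨hCba, hba, hnab⟩)
        · exact Or.inr ⟨hCab, decide_eq_true hba⟩
        · refine Or.inl ⟨hCba, ?_⟩
          exact decide_eq_false hnab
      · rintro (⟨hCba, hf⟩ | ⟨hCab, hf⟩)
        · -- inF0 C f b a : decide (r.le a b) = false
          have hn : ¬ r.le a b := of_decide_eq_false hf
          rcases r.total b a (Relation.ReflTransGen.single (Or.inl hCba)) with h | h
          · exact Or.inr ⟨hCba, h, hn⟩
          · exact absurd h hn
        · exact Or.inl ⟨hCab, of_decide_eq_true hf⟩
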